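/- Inverse correctness of the two-phase transformed reversal: defining uncall6 and uniterate6 as the clause-wise inverses of call6 and iterate6, the composite uniterate6 ∘ uncall6 applied to the output of iterate6/call6 recovers the original input: for all lists xs, uniterate6 (uncall6 (call6 (iterate6 (xs, Id)))) = xs, where uncall6 : List α → Continuation α × List α satisfies uncall6 (call6 (g, ys)) = (g, ys) for reachable states and uniterate6 (g, []) recovers xs from the continuation stack. -/
import Mathlib


inductive Continuation (α : Type*) where
  | Id : Continuation α
  | F : α → Continuation α → Continuation α

def snoc {α : Type*} : List α → α → List α
  | [], x => [x]
  | y :: ys, x => y :: snoc ys x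

def unsnocT {α : Type*} : α → List α → List α × α
  | x, [] => ([], x)
  | x, y :: l => ((x :: (unsnocT y l).1), (unsnocT y l).2)

theorem unsnocT_fst_length {α : Type*} (x : α) (l : List α) :
    (unsnocT x l).1.length = l.length := by
  induction l generalizing x with
  | nil => rfl
  | cons y l ih => simp [unsnocT, ih]

def iterate6 {α : Type*} : List α × Continuation α → Continuation α × List α
  | (x :: xs, g) => iterate6 (xs, Continuation.F x g)
  | ([], g) => (g, [])
termination_by p => p.1.length

def call6 {α : Type*} : Continuation α × List α → List α
  | (Continuation.F x g, ys) => call6 (g, snoc ys x)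
  | (Continuation.Id, ys) => ys
termination_by p => sizeOf p.1

def uncall6' {α : Type*} : Continuation α × List α → Continuation α × List α
  | (g, []) => (g, [])
  | (g, z :: zs) => uncall6' (Continuation.F (unsnocT z zs).2 g, (unsnocT z zs).1)
termination_by p => p.2.length
decreasing_by simp [unsnocT_fst_length]

def uniterate6 {α : Type*} : Continuation α × List α → List α
  | (Continuation.Id, xs) => xs
  | (Continuation.F x g, xs) => uniterate6 (g, x :: xs)
termination_by p => sizeOf p.1


def stk {α : Type*} : Continuation α → List α
  | Continuation.Id => []
  | Continuation.F x g => x :: stk g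

lemma snoc_eq {α : Type*} (ys : List α) (x : α) : snoc ys x = ys ++ [x] := by
  induction ys with
  | nil => rfl
  | cons y ys ih => simp [snoc, ih]

lemma call6_eq {α : Type*} (g : Continuation α) (ys : List α) :
    call6 (g, ys) = ys ++ stk g := by
  induction g generalizing ys with
  | Id => simp [call6, stk]
  | F x g ih => simp [call6, stk, snoc_eq, ih]

lemma iterate6_eq {α : Type*} (xs : List α) (g : Continuation α) :
    iterate6 (xs, g) = (xs.foldl (fun g x => Continuation.F x g) g, []) := by
  induction xs generalizing g with
  | nil => simp [iterate6]
  | cons x xs ih => simp [iterate6, ih]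

lemma stk_foldl {α : Type*} (xs : List α) (g : Continuation α) :
    stk (xs.foldl (fun g x => Continuation.F x g) g) = xs.reverse ++ stk g := by
  induction xs generalizing g with
  | nil => simp
  | cons x xs ih => simp [ih, stk]

lemma unsnocT_snoc {α : Type*} (ys : List α) (y x : α) :
    unsnocT y (ys ++ [x]) = (y :: ys, x) := by
  induction ys generalizing y with
  | nil => simp [unsnocT]
  | cons a ys ih => simp [unsnocT, ih]

lemma uncall6'_snoc {α : Type*} (ys : List α) (x : α) (g : Continuation α) :
    uncall6' (g, ys ++ [x]) = uncall6' (Continuation.F x g, ys) := by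
  cases ys with
  | nil => simp [uncall6', unsnocT]
  | cons y ys => simp [uncall6', unsnocT_snoc]

lemma uncall6'_eq {α : Type*} (zs : List α) (g : Continuation α) :
    uncall6' (g, zs) = (zs.foldr Continuation.F g, []) := by
  induction zs using List.reverseRecOn generalizing g with
  | nil => simp [uncall6']
  | append_singleton ys x ih => simp [uncall6'_snoc, ih]

lemma uniterate6_foldr {α : Type*} (zs : List α) (g : Continuation α) (xs : List α) :
    uniterate6 (zs.foldr Continuation.F g, xs) = uniterate6 (g, zs.reverse ++ xs) := by
  induction zs generalizing xs with
  | nil => simp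
  | cons z zs ih =>
    simp only [List.foldr_cons, List.reverse_cons]
    rw [uniterate6, ih]
    simp

theorem inverse_correctness {α : Type*} :
    ∀ xs : List α,
      uniterate6 (uncall6' (Continuation.Id, call6 (iterate6 (xs, Continuation.Id)))) = xs := by
  intro xs
  rw [iterate6_eq, call6_eq, uncall6'_eq, uniterate6_foldr]
  simp [stk_foldl, stk, uniterate6]
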